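/- arXiv:1904.09415 — 2 statements merged into one kernel-verified Lean document; each statement's English description precedes it below -/
import Mathlib

section
/- Let (Ω, 𝓕, P) be a probability space and let Z, Z̃ : Ω → EuclideanSpace ℝ (Fin d) be random vectors in L² (MemLp 2) with means μ₁ = E[Z] and μ₂ = E[Z̃]. Assume E[‖Z − μ₁‖²] = E[‖Z̃ − μ₂‖²] = T and E[⟪Z − μ₁, Z̃ − μ₂⟫] ≥ T. Then E[‖Z − Z̃‖²] ≤ ‖μ₁ − μ₂‖². Consequently, if in addition (1/2) · ‖μ₁ − μ₂‖² ≤ b for some b ≥ 0, then (1/2) · E[‖Z − Z̃‖²] ≤ b. -/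
open MeasureTheory
open scoped RealInnerProductSpace

/-!
Write `f = Z - μ₁` and `g = Z̃ - μ₂`. Since `Z - Z̃` has mean `μ₁ - μ₂` and centred part `f - g`,
the bias–variance decomposition and the expansion of `‖f - g‖²` give
`E‖Z - Z̃‖² = E‖f‖² + E‖g‖² - 2 E⟪f, g⟫ + ‖μ₁ - μ₂‖² = 2T - 2 E⟪f, g⟫ + ‖μ₁ - μ₂‖²`,
and the cross-covariance assumption `E⟪f, g⟫ ≥ T` makes the first three terms nonpositive.
-/

section

variable {α E : Type*} [MeasurableSpace α] {μ : Measure α}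
  [NormedAddCommGroup E] [InnerProductSpace ℝ E]

theorem MeasureTheory.MemLp.integrable_inner {f g : α → E} (hf : MemLp f 2 μ)
    (hg : MemLp g 2 μ) :
    Integrable (fun x ↦ ⟪f x, g x⟫) μ :=
  (L2.integrable_inner (hf.toLp f) (hg.toLp g)).congr <| by
    filter_upwards [hf.coeFn_toLp, hg.coeFn_toLp] with x hfx hgx
    rw [hfx, hgx]

theorem integral_norm_sub_sq_eq {f g : α → E} (hf : MemLp f 2 μ) (hg : MemLp g 2 μ) :
    ∫ x, ‖f x - g x‖ ^ 2 ∂μ =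
      ∫ x, ‖f x‖ ^ 2 ∂μ - 2 * ∫ x, ⟪f x, g x⟫ ∂μ + ∫ x, ‖g x‖ ^ 2 ∂μ := by
  simp_rw [norm_sub_sq_real]
  rw [integral_add _ hg.norm.integrable_sq, integral_sub hf.norm.integrable_sq, integral_const_mul]
  · exact (hf.integrable_inner hg).const_mul 2
  · exact hf.norm.integrable_sq.sub ((hf.integrable_inner hg).const_mul 2)

variable [CompleteSpace E] [IsProbabilityMeasure μ]

theorem integral_sub_integral_eq_zero {X : α → E} (hX : Integrable X μ) :
    ∫ x, (X x - ∫ y, X y ∂μ) ∂μ = 0 := by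
  rw [integral_sub hX (integrable_const _), integral_const, probReal_univ, one_smul, sub_self]

theorem integral_norm_sq_eq_integral_norm_sub_integral_sq_add {X : α → E} (hX : MemLp X 2 μ) :
    ∫ x, ‖X x‖ ^ 2 ∂μ = ∫ x, ‖X x - ∫ y, X y ∂μ‖ ^ 2 ∂μ + ‖∫ y, X y ∂μ‖ ^ 2 := by
  set m := ∫ y, X y ∂μ
  have hcentred : MemLp (fun x ↦ X x - m) 2 μ := hX.sub (memLp_const m)
  have hcross : ∫ x, ⟪X x - m, -m⟫ ∂μ = 0 := by
    simp_rw [real_inner_comm (-m)]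
    rw [integral_inner (hcentred.integrable one_le_two),
      integral_sub_integral_eq_zero (hX.integrable one_le_two), inner_zero_right]
  calc ∫ x, ‖X x‖ ^ 2 ∂μ = ∫ x, ‖(X x - m) - -m‖ ^ 2 ∂μ := by simp
    _ = ∫ x, ‖X x - m‖ ^ 2 ∂μ + ‖m‖ ^ 2 := by
      rw [integral_norm_sub_sq_eq hcentred (memLp_const (-m)), hcross]
      simp

end

/-- If the cross-covariance trace is at least the common covariance trace `T`, then
`E‖Z − Z̃‖² ≤ ‖μ₁ − μ₂‖²`; consequently the mean (KL-type) constraint `(1/2)‖μ₁ − μ₂‖² ≤ b`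
implies the norm-ball constraint `(1/2)E‖Z − Z̃‖² ≤ b`. -/
theorem expected_sq_dist_le_sq_dist_means {Ω : Type*} [MeasureSpace Ω]
    [IsProbabilityMeasure (volume : Measure Ω)] {d : ℕ}
    (Z Zt : Ω → EuclideanSpace ℝ (Fin d)) (hZ : MemLp Z 2) (hZt : MemLp Zt 2)
    (μ₁ μ₂ : EuclideanSpace ℝ (Fin d)) (hμ₁ : μ₁ = ∫ ω, Z ω) (hμ₂ : μ₂ = ∫ ω, Zt ω)
    (T : ℝ) (hT₁ : (∫ ω, ‖Z ω - μ₁‖ ^ 2) = T) (hT₂ : (∫ ω, ‖Zt ω - μ₂‖ ^ 2) = T)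
    (hζ : T ≤ ∫ ω, ⟪Z ω - μ₁, Zt ω - μ₂⟫) :
    (∫ ω, ‖Z ω - Zt ω‖ ^ 2) ≤ ‖μ₁ - μ₂‖ ^ 2 ∧
      ∀ b : ℝ, 0 ≤ b → (1 / 2) * ‖μ₁ - μ₂‖ ^ 2 ≤ b →
        (1 / 2) * (∫ ω, ‖Z ω - Zt ω‖ ^ 2) ≤ b := by
  have hmean : ∫ ω, (Z ω - Zt ω) = μ₁ - μ₂ := by
    rw [integral_sub (hZ.integrable one_le_two) (hZt.integrable one_le_two), hμ₁, hμ₂]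
  have hdecomp : ∫ ω, ‖Z ω - Zt ω‖ ^ 2 =
      T - 2 * (∫ ω, ⟪Z ω - μ₁, Zt ω - μ₂⟫) + T + ‖μ₁ - μ₂‖ ^ 2 := by
    rw [integral_norm_sq_eq_integral_norm_sub_integral_sq_add (X := fun ω ↦ Z ω - Zt ω)
      (hZ.sub hZt), hmean]
    simp_rw [sub_sub_sub_comm _ (Zt _) μ₁ μ₂]
    rw [integral_norm_sub_sq_eq (f := fun ω ↦ Z ω - μ₁) (g := fun ω ↦ Zt ω - μ₂)
      (hZ.sub (memLp_const μ₁)) (hZt.sub (memLp_const μ₂)), hT₁, hT₂]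
  have hbound : ∫ ω, ‖Z ω - Zt ω‖ ^ 2 ≤ ‖μ₁ - μ₂‖ ^ 2 := by
    rw [hdecomp]
    linarith
  exact ⟨hbound, fun b _ hb ↦ by linarith⟩
end

section
/- Let d be a positive natural number, let μ₁, μ₂ ∈ EuclideanSpace ℝ (Fin d), let Σ : Matrix (Fin d) (Fin d) ℝ be a symmetric positive definite matrix, and let b > 0. If the χ²-divergence ∫ N(z; μ₁, Σ) · (1/2) · (N(z; μ₂, Σ)/N(z; μ₁, Σ) − 1)² dz ≤ b, then ⟪μ₁ − μ₂, Σ⁻¹.mulVec (μ₁ − μ₂)⟫ ≤ Real.log (1 + 2·b). That is, a χ²-divergence distortion budget of b implies a bound on the Σ⁻¹-weighted squared distance between the means, analogous to the equal-covariance KL constraint with a new constant. -/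
/-!
For equal covariances the χ²-divergence is computed exactly. Write `p = N(μ₁, Σ)`, `q = N(μ₂, Σ)`
and `m = ⟪μ₁ - μ₂, Σ⁻¹ (μ₁ - μ₂)⟫`. The parallelogram law for the quadratic form of `Σ⁻¹` gives
`q² / p = exp m · N(2μ₂ - μ₁, Σ)`, so, every Gaussian density integrating to `1`,
`∫ p (q / p - 1)² / 2 = (∫ q² / p - 2 ∫ q + ∫ p) / 2 = (exp m - 1) / 2`.
The normalisation comes from writing `Σ⁻¹ = Bᵀ B` and changing variables by `B`.
-/

open MeasureTheory
open scoped RealInnerProductSpace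

/-- The multivariate Gaussian density `N(z; μ, Σ)` on `EuclideanSpace ℝ (Fin d)`. -/
noncomputable def gaussPdf {d : ℕ} (μ : EuclideanSpace ℝ (Fin d)) (S : Matrix (Fin d) (Fin d) ℝ)
    (z : EuclideanSpace ℝ (Fin d)) : ℝ :=
  (2 * Real.pi) ^ (-(d : ℝ) / 2) * S.det ^ (-(1 : ℝ) / 2) *
    Real.exp (-(1 / 2) * ⟪z - μ, (WithLp.toLp 2 ((S⁻¹).mulVec (z - μ)) : EuclideanSpace ℝ (Fin d))⟫)

open Matrix

section LinearChangeOfVariables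

variable {E F : Type*} [NormedAddCommGroup E] [NormedSpace ℝ E] [MeasurableSpace E] [BorelSpace E]
  [FiniteDimensional ℝ E] (μ : Measure E) [μ.IsAddHaarMeasure] [NormedAddCommGroup F]
  {L : E →ₗ[ℝ] E}

theorem integrable_comp_linearMap_iff (hL : LinearMap.det L ≠ 0) {f : E → F} :
    Integrable (fun x ↦ f (L x)) μ ↔ Integrable f μ := by
  let e := (L.equivOfDetNeZero hL).toContinuousLinearEquiv.toHomeomorph.toMeasurableEquiv
  have hmap : μ.map e = ENNReal.ofReal |(LinearMap.det L)⁻¹| • μ :=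
    Measure.map_linearMap_addHaar_eq_smul_addHaar μ hL
  change Integrable (f ∘ e) μ ↔ _
  rw [← integrable_map_equiv e f, hmap,
    integrable_smul_measure (by simpa using hL) ENNReal.ofReal_ne_top]

theorem integral_comp_linearMap [NormedSpace ℝ F] (hL : LinearMap.det L ≠ 0) (f : E → F) :
    ∫ x, f (L x) ∂μ = |(LinearMap.det L)⁻¹| • ∫ x, f x ∂μ := by
  let e := (L.equivOfDetNeZero hL).toContinuousLinearEquiv.toHomeomorph.toMeasurableEquiv
  have hmap : μ.map e = ENNReal.ofReal |(LinearMap.det L)⁻¹| • μ :=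
    Measure.map_linearMap_addHaar_eq_smul_addHaar μ hL
  change ∫ x, f (e x) ∂μ = _
  rw [← integral_map_equiv e f, hmap, integral_smul_measure,
    ENNReal.toReal_ofReal (abs_nonneg _)]

end LinearChangeOfVariables

section GaussianIntegral

variable {E : Type*} [NormedAddCommGroup E] [InnerProductSpace ℝ E] [FiniteDimensional ℝ E]
  [MeasurableSpace E] [BorelSpace E] {L : E →ₗ[ℝ] E}

theorem integrable_exp_neg_half_norm_sq_comp (hL : LinearMap.det L ≠ 0) :
    Integrable (fun x ↦ Real.exp (-(1 / 2) * ‖L x‖ ^ 2)) := by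
  refine (integrable_comp_linearMap_iff volume hL
    (f := fun x ↦ Real.exp (-(1 / 2) * ‖x‖ ^ 2))).mpr ?_
  simpa [Complex.norm_exp, ← Complex.ofReal_pow] using
    (GaussianFourier.integrable_cexp_neg_mul_sq_norm_add (V := E) (b := 1 / 2)
      (by norm_num) 0 0).norm

theorem integral_exp_neg_half_norm_sq_comp (hL : LinearMap.det L ≠ 0) :
    ∫ x, Real.exp (-(1 / 2) * ‖L x‖ ^ 2) =
      |LinearMap.det L|⁻¹ * (2 * Real.pi) ^ (Module.finrank ℝ E / 2 : ℝ) := by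
  rw [integral_comp_linearMap volume hL (fun x ↦ Real.exp (-(1 / 2) * ‖x‖ ^ 2)),
    GaussianFourier.integral_rexp_neg_mul_sq_norm (by norm_num), abs_inv, smul_eq_mul]
  norm_num [div_div_eq_mul_div, mul_comm]

end GaussianIntegral

section MatrixSquareRoot

variable {n : Type*} [Fintype n] [DecidableEq n]

open scoped MatrixOrder in
theorem Matrix.PosSemidef.exists_eq_conjTranspose_mul_self {A : Matrix n n ℝ}
    (hA : A.PosSemidef) : ∃ B : Matrix n n ℝ, A = Bᴴ * B :=
  CStarAlgebra.nonneg_iff_eq_star_mul_self.mp hA.nonneg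

theorem Matrix.inner_toEuclideanLin_conjTranspose_mul_self (B : Matrix n n ℝ)
    (x : EuclideanSpace ℝ n) :
    ⟪x, toEuclideanLin (Bᴴ * B) x⟫ = ‖toEuclideanLin B x‖ ^ 2 := by
  rw [toLpLin_mul_same, LinearMap.comp_apply, toEuclideanLin_conjTranspose_eq_adjoint,
    LinearMap.adjoint_inner_right, real_inner_self_eq_norm_sq]

end MatrixSquareRoot

section GaussPdf

variable {d : ℕ} {S : Matrix (Fin d) (Fin d) ℝ}

theorem gaussPdf_def (μ : EuclideanSpace ℝ (Fin d)) (S : Matrix (Fin d) (Fin d) ℝ)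
    (z : EuclideanSpace ℝ (Fin d)) :
    gaussPdf μ S z = (2 * Real.pi) ^ (-(d : ℝ) / 2) * S.det ^ (-(1 : ℝ) / 2) *
      Real.exp (-(1 / 2) * ⟪z - μ, toEuclideanLin S⁻¹ (z - μ)⟫) :=
  rfl

theorem gaussPdf_pos (hS : S.PosDef) (μ z : EuclideanSpace ℝ (Fin d)) : 0 < gaussPdf μ S z := by
  have := hS.det_pos
  unfold gaussPdf
  positivity

theorem exists_gaussPdf_eq_exp_neg_half_norm_sq (hS : S.PosDef) :
    ∃ L : EuclideanSpace ℝ (Fin d) →ₗ[ℝ] EuclideanSpace ℝ (Fin d),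
      |LinearMap.det L| = S.det ^ (-(1 : ℝ) / 2) ∧
      ∀ μ z, gaussPdf μ S z = (2 * Real.pi) ^ (-(d : ℝ) / 2) * S.det ^ (-(1 : ℝ) / 2) *
        Real.exp (-(1 / 2) * ‖L (z - μ)‖ ^ 2) := by
  obtain ⟨B, hB⟩ := hS.inv.posSemidef.exists_eq_conjTranspose_mul_self
  refine ⟨toEuclideanLin B, ?_, fun μ z ↦ ?_⟩
  · have hdet : B.det ^ 2 = S.det⁻¹ := by
      have := congrArg det hB
      rwa [det_nonsing_inv, Ring.inverse_eq_inv', det_mul, det_conjTranspose, star_trivial, ← sq,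
        eq_comm] at this
    rw [LinearMap.det_toLpLin, ← Real.sqrt_sq_eq_abs, hdet, Real.sqrt_inv, Real.sqrt_eq_rpow,
      ← Real.rpow_neg hS.det_pos.le]
    norm_num
  · rw [gaussPdf_def, hB, inner_toEuclideanLin_conjTranspose_mul_self]

theorem integrable_gaussPdf (hS : S.PosDef) (μ : EuclideanSpace ℝ (Fin d)) :
    Integrable (gaussPdf μ S) := by
  obtain ⟨L, hLdet, hL⟩ := exists_gaussPdf_eq_exp_neg_half_norm_sq hS
  have hLdet0 : LinearMap.det L ≠ 0 := by
    rw [← abs_pos, hLdet]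
    exact Real.rpow_pos_of_pos hS.det_pos _
  simp_rw [funext (hL μ)]
  exact ((integrable_exp_neg_half_norm_sq_comp hLdet0).comp_sub_right μ).const_mul _

theorem integral_gaussPdf (hS : S.PosDef) (μ : EuclideanSpace ℝ (Fin d)) :
    ∫ z, gaussPdf μ S z = 1 := by
  obtain ⟨L, hLdet, hL⟩ := exists_gaussPdf_eq_exp_neg_half_norm_sq hS
  have hdet : 0 < S.det ^ (-(1 : ℝ) / 2) := Real.rpow_pos_of_pos hS.det_pos _
  have hLdet0 : LinearMap.det L ≠ 0 := by rw [← abs_pos, hLdet]; exact hdet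
  have h2pi : (0 : ℝ) < 2 * Real.pi := by positivity
  simp_rw [hL μ]
  rw [integral_const_mul, integral_sub_right_eq_self (fun z ↦ Real.exp (-(1 / 2) * ‖L z‖ ^ 2)),
    integral_exp_neg_half_norm_sq_comp hLdet0, hLdet, finrank_euclideanSpace_fin]
  calc _ = (2 * Real.pi) ^ (-(d : ℝ) / 2 + d / 2) *
        (S.det ^ (-(1 : ℝ) / 2) * (S.det ^ (-(1 : ℝ) / 2))⁻¹) := by
        rw [Real.rpow_add h2pi]; ring
    _ = 1 := by rw [mul_inv_cancel₀ hdet.ne', neg_div, neg_add_cancel, Real.rpow_zero, one_mul]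

theorem sq_gaussPdf (μ₁ μ₂ : EuclideanSpace ℝ (Fin d)) (S : Matrix (Fin d) (Fin d) ℝ)
    (z : EuclideanSpace ℝ (Fin d)) :
    gaussPdf μ₂ S z ^ 2 = Real.exp ⟪μ₁ - μ₂, toEuclideanLin S⁻¹ (μ₁ - μ₂)⟫ *
      (gaussPdf (2 • μ₂ - μ₁) S z * gaussPdf μ₁ S z) := by
  have h₁ : z - μ₁ = (z - μ₂) - (μ₁ - μ₂) := by abel
  have h₂ : z - (2 • μ₂ - μ₁) = (z - μ₂) + (μ₁ - μ₂) := by rw [two_smul]; abel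
  simp only [gaussPdf_def, h₁, h₂]
  generalize z - μ₂ = u, μ₁ - μ₂ = δ
  set T := toEuclideanLin S⁻¹
  have hexp : Real.exp (-(1 / 2) * ⟪u, T u⟫) ^ 2 = Real.exp ⟪δ, T δ⟫ *
      (Real.exp (-(1 / 2) * ⟪u + δ, T (u + δ)⟫) * Real.exp (-(1 / 2) * ⟪u - δ, T (u - δ)⟫)) := by
    rw [← Real.exp_add, ← Real.exp_add, sq, ← Real.exp_add]
    congr 1
    simp only [map_add, map_sub, inner_add_left, inner_add_right, inner_sub_left, inner_sub_right]
    ring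
  rw [mul_pow, hexp]
  ring

theorem integral_chiSq_gaussPdf (hS : S.PosDef) (μ₁ μ₂ : EuclideanSpace ℝ (Fin d)) :
    ∫ z, gaussPdf μ₁ S z * ((1 / 2) * (gaussPdf μ₂ S z / gaussPdf μ₁ S z - 1) ^ 2) =
      (Real.exp ⟪μ₁ - μ₂, toEuclideanLin S⁻¹ (μ₁ - μ₂)⟫ - 1) / 2 := by
  set m := ⟪μ₁ - μ₂, toEuclideanLin S⁻¹ (μ₁ - μ₂)⟫
  have hpt : ∀ z, gaussPdf μ₁ S z * ((1 / 2) * (gaussPdf μ₂ S z / gaussPdf μ₁ S z - 1) ^ 2) =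
      (Real.exp m * gaussPdf (2 • μ₂ - μ₁) S z - 2 * gaussPdf μ₂ S z + gaussPdf μ₁ S z) / 2 := by
    intro z
    have := (gaussPdf_pos hS μ₁ z).ne'
    field_simp
    linear_combination sq_gaussPdf μ₁ μ₂ S z
  have hr := (integrable_gaussPdf hS (2 • μ₂ - μ₁)).const_mul (Real.exp m)
  have hq := (integrable_gaussPdf hS μ₂).const_mul 2
  have hrq : Integrable fun z ↦ Real.exp m * gaussPdf (2 • μ₂ - μ₁) S z - 2 * gaussPdf μ₂ S z :=
    hr.sub hq
  simp_rw [hpt]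
  rw [integral_div, integral_add hrq (integrable_gaussPdf hS μ₁), integral_sub hr hq,
    integral_const_mul, integral_const_mul, integral_gaussPdf hS, integral_gaussPdf hS,
    integral_gaussPdf hS]
  ring

end GaussPdf

theorem chiSq_budget_imp_mean_dist_bound_general {d : ℕ}
    (μ₁ μ₂ : EuclideanSpace ℝ (Fin d)) (S : Matrix (Fin d) (Fin d) ℝ)
    (hS : S.PosDef) (b : ℝ)
    (hdiv : (∫ z : EuclideanSpace ℝ (Fin d),
        gaussPdf μ₁ S z * ((1 / 2) * (gaussPdf μ₂ S z / gaussPdf μ₁ S z - 1) ^ 2)) ≤ b) :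
    ⟪μ₁ - μ₂, (WithLp.toLp 2 ((S⁻¹).mulVec (μ₁ - μ₂)) : EuclideanSpace ℝ (Fin d))⟫ ≤
      Real.log (1 + 2 * b) := by
  rw [integral_chiSq_gaussPdf hS] at hdiv
  change ⟪μ₁ - μ₂, toEuclideanLin S⁻¹ (μ₁ - μ₂)⟫ ≤ _
  have := Real.exp_pos ⟪μ₁ - μ₂, toEuclideanLin S⁻¹ (μ₁ - μ₂)⟫
  rw [Real.le_log_iff_exp_le (by linarith)]
  linarith

/-- A χ²-divergence distortion budget of `b` between two equal-covariance Gaussians implies the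
bound `‖μ₁ − μ₂‖²_{Σ⁻¹} ≤ log(1 + 2b)` on the weighted squared distance between the means. -/
theorem chiSq_budget_imp_mean_dist_bound {d : ℕ} (hd : 0 < d)
    (μ₁ μ₂ : EuclideanSpace ℝ (Fin d)) (S : Matrix (Fin d) (Fin d) ℝ)
    (hSs : S.IsSymm) (hS : S.PosDef) (b : ℝ) (hb : 0 < b)
    (hdiv : (∫ z : EuclideanSpace ℝ (Fin d),
        gaussPdf μ₁ S z * ((1 / 2) * (gaussPdf μ₂ S z / gaussPdf μ₁ S z - 1) ^ 2)) ≤ b) :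
    ⟪μ₁ - μ₂, (WithLp.toLp 2 ((S⁻¹).mulVec (μ₁ - μ₂)) : EuclideanSpace ℝ (Fin d))⟫ ≤
      Real.log (1 + 2 * b) :=
  chiSq_budget_imp_mean_dist_bound_general μ₁ μ₂ S hS b hdiv
end
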